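/- arXiv:1204.3012 — 4 statements merged into one kernel-verified Lean document; each statement's English description precedes it below -/
import Mathlib

section
/- Lightlike rigidity in Minkowski space: if p ⪯ q and dist(p.2, q.2) = q.1 − p.1 (i.e. p and q are null-related), then every causal path in M₀ = ℝ × EuclideanSpace ℝ (Fin n) from p to q has image contained in the straight line segment joining p and q. (This rigidity of causal curves between null-related points is used implicitly in the paper's Examples 2 and 3, where removing a point from a null segment destroys causal connectivity.) -/
/-- (n+1)-dimensional Minkowski space: time × space. -/
abbrev M0 (n : ℕ) := ℝ × EuclideanSpace ℝ (Fin n)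

/-- The causal order on Minkowski space: `p ⪯ q` iff `dist p.2 q.2 ≤ q.1 - p.1`. -/
def causalLe {n : ℕ} (p q : M0 n) : Prop := dist p.2 q.2 ≤ q.1 - p.1

/-- The chronological relation on Minkowski space: `p ≪ q` iff `dist p.2 q.2 < q.1 - p.1`. -/
def chronLt {n : ℕ} (p q : M0 n) : Prop := dist p.2 q.2 < q.1 - p.1

/-- A causal path in `M ⊆ M₀` from `p` to `q`: a continuous map `γ : [0,1] → M₀` with image
in `M`, `γ 0 = p`, `γ 1 = q`, and `γ s ⪯ γ t` whenever `s ≤ t`. -/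
def IsCausalPath {n : ℕ} (M : Set (M0 n)) (p q : M0 n)
    (γ : Set.Icc (0:ℝ) 1 → M0 n) : Prop :=
  Continuous γ ∧ (∀ t, γ t ∈ M) ∧
  γ ⟨0, by norm_num⟩ = p ∧ γ ⟨1, by norm_num⟩ = q ∧
  ∀ s t : Set.Icc (0:ℝ) 1, s ≤ t → causalLe (γ s) (γ t)

/-- A timelike path: a causal path with `γ s ≪ γ t` whenever `s < t`. -/
def IsTimelikePath {n : ℕ} (M : Set (M0 n)) (p q : M0 n)
    (γ : Set.Icc (0:ℝ) 1 → M0 n) : Prop :=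
  IsCausalPath M p q γ ∧ ∀ s t : Set.Icc (0:ℝ) 1, s < t → chronLt (γ s) (γ t)

/-- Lightlike rigidity: if `p ⪯ q` and `p`, `q` are null-related
(`dist p.2 q.2 = q.1 - p.1`), then every causal path in `M₀` from `p` to `q`
has image contained in the straight segment joining `p` and `q`. -/
theorem minkowski_lightlike_rigidity (n : ℕ) (hn : 1 ≤ n) (p q : M0 n)
    (hle : causalLe p q) (hnull : dist p.2 q.2 = q.1 - p.1)
    (γ : Set.Icc (0:ℝ) 1 → M0 n) (hγ : IsCausalPath Set.univ p q γ) :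
    ∀ t : Set.Icc (0:ℝ) 1, γ t ∈ segment ℝ p q := by
  obtain ⟨-, -, h0, h1, hc⟩ := hγ
  intro t
  set x : M0 n := γ t with hx
  have h1' : causalLe p x := by
    have := hc ⟨0, by norm_num⟩ t (by exact t.2.1)
    rwa [h0] at this
  have h2' : causalLe x q := by
    have := hc t ⟨1, by norm_num⟩ (by exact t.2.2)
    rwa [h1] at this
  have hd1 : dist p.2 x.2 ≤ x.1 - p.1 := h1'
  have hd2 : dist x.2 q.2 ≤ q.1 - x.1 := h2'
  have htri : dist p.2 q.2 ≤ dist p.2 x.2 + dist x.2 q.2 := dist_triangle _ _ _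
  have hsum : dist p.2 x.2 + dist x.2 q.2 = dist p.2 q.2 := by
    have : dist p.2 x.2 + dist x.2 q.2 ≤ q.1 - p.1 := by linarith
    linarith [htri, hnull ▸ this]
  have he1 : dist p.2 x.2 = x.1 - p.1 := by
    by_contra h
    have : dist p.2 x.2 < x.1 - p.1 := lt_of_le_of_ne hd1 h
    have : dist p.2 x.2 + dist x.2 q.2 < q.1 - p.1 := by linarith
    rw [hsum, hnull] at this; exact lt_irrefl _ this
  have hseg2 : x.2 ∈ segment ℝ p.2 q.2 :=
    mem_segment_iff_wbtw.mpr (dist_add_dist_eq_iff.mp hsum)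
  obtain ⟨a, b, ha, hb, hab, habx⟩ := hseg2
  refine ⟨a, b, ha, hb, hab, ?_⟩
  have hdpx : dist p.2 x.2 = b * dist p.2 q.2 := by
    have hsub : x.2 - p.2 = b • (q.2 - p.2) := by
      rw [← habx]
      have : a • p.2 = (1 - b) • p.2 := by rw [show a = 1 - b by linarith]
      rw [this]; module
    rw [dist_eq_norm', dist_eq_norm', hsub, norm_smul, Real.norm_eq_abs,
      abs_of_nonneg hb]
  have hx1 : x.1 = a * p.1 + b * q.1 := by
    rw [hdpx, hnull] at he1; linear_combination -he1 - p.1 * hab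
  have : (a • p + b • q : M0 n) = x := Prod.ext (by simp [hx1]) habx
  exact this
end

section
/- In punctured Minkowski space M = M₀ \ {(0, 0)} (the origin removed), let v ∈ EuclideanSpace ℝ (Fin n) with ‖v‖ = 1, and set p = (−1, v) and q = (1, −v). Then p ⪯ q (indeed p and q are null-related, with the null segment joining them passing through the removed origin), yet there exists no causal path in M from p to q. (This is the causal disconnection produced by removing a point, underlying the paper's Examples 2 and 3 of holed spacetimes.) -/
/-- In punctured Minkowski space (origin removed), with `‖v‖ = 1`, `p = (-1, v)`,
`q = (1, -v)`: `p ⪯ q` and `p`, `q` are null-related, the null segment joining them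
passes through the removed origin, yet there is no causal path in `M` from `p` to `q`. -/
theorem punctured_minkowski_causal_disconnection (n : ℕ) (hn : 1 ≤ n)
    (v : EuclideanSpace ℝ (Fin n)) (hv : ‖v‖ = 1) :
    causalLe ((-1, v) : M0 n) ((1, -v) : M0 n) ∧
    dist ((-1, v) : M0 n).2 ((1, -v) : M0 n).2 = ((1, -v) : M0 n).1 - ((-1, v) : M0 n).1 ∧
    ((0, 0) : M0 n) ∈ segment ℝ ((-1, v) : M0 n) ((1, -v) : M0 n) ∧
    ¬ ∃ γ : Set.Icc (0:ℝ) 1 → M0 n,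
        IsCausalPath ({((0, 0) : M0 n)}ᶜ) ((-1, v) : M0 n) ((1, -v) : M0 n) γ := by

  have hdist : dist v (-v) = 2 := by
    rw [dist_eq_norm, sub_neg_eq_add, show v + v = (2:ℝ) • v by module, norm_smul]
    simp [hv]
  refine ⟨?_, ?_, ?_, ?_⟩
  · show dist v (-v) ≤ (1:ℝ) - (-1)
    rw [hdist]; norm_num
  · show dist v (-v) = (1:ℝ) - (-1)
    rw [hdist]; norm_num
  · refine ⟨1/2, 1/2, by norm_num, by norm_num, by norm_num, ?_⟩
    apply Prod.ext
    · norm_num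
    · show (1/2 : ℝ) • v + (1/2 : ℝ) • (-v) = 0
      module
  · rintro ⟨γ, hcont, hmem, h0, h1, hle⟩
    have hf : Continuous fun t : Set.Icc (0:ℝ) 1 => (γ t).1 := continuous_fst.comp hcont
    have hmem0 : (0:ℝ) ∈ Set.Icc ((γ ⟨0, by norm_num⟩).1) ((γ ⟨1, by norm_num⟩).1) := by
      rw [h0, h1]; norm_num
    obtain ⟨t, ht⟩ := intermediate_value_univ (⟨0, by norm_num⟩ : Set.Icc (0:ℝ) 1)
      ⟨1, by norm_num⟩ hf hmem0
    have hpt : causalLe ((-1, v) : M0 n) (γ t) := by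
      rw [← h0]; exact hle _ _ (Subtype.mk_le_mk.mpr t.2.1)
    have htq : causalLe (γ t) ((1, -v) : M0 n) := by
      rw [← h1]; exact hle _ _ (Subtype.mk_le_mk.mpr t.2.2)
    set x := (γ t).2 with hx
    have h1' : dist v x ≤ 1 := by
      have := hpt; simp only [causalLe] at this
      simp only [ht] at this; linarith
    have h2' : dist x (-v) ≤ 1 := by
      have := htq; simp only [causalLe] at this
      simp only [ht] at this; linarith
    have htri : (2:ℝ) ≤ dist v x + dist x (-v) := hdist ▸ dist_triangle v x (-v)
    have e1 : dist v x = 1 := by linarith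
    have e2 : dist x (-v) = 1 := by linarith
    have n1 : ‖v - x‖ = 1 := by rwa [dist_eq_norm] at e1
    have n2 : ‖v + x‖ = 1 := by
      rw [dist_eq_norm, sub_neg_eq_add] at e2
      rwa [add_comm] at e2
    have hpar := norm_add_sq_real v x
    have hpar2 := norm_sub_sq_real v x
    have hx0 : ‖x‖ = 0 := by
      have hsq : ‖v + x‖ ^ 2 + ‖v - x‖ ^ 2 = 2 * (‖v‖ ^ 2 + ‖x‖ ^ 2) := by
        rw [hpar, hpar2]; ring
      rw [n1, n2, hv] at hsq
      nlinarith [norm_nonneg x]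
    have hxz : x = 0 := norm_eq_zero.mp hx0
    have : γ t = ((0, 0) : M0 n) := Prod.ext ht hxz
    exact hmem t (by simp [this])
end

section
/- Timelike connectivity of punctured Minkowski space: if p, q ∈ M = M₀ \ {(0, 0)} and p ≪ q, then there exists a timelike path in M from p to q, i.e. a continuous γ : [0,1] → M₀ avoiding the origin with γ 0 = p, γ 1 = q and γ s ≪ γ t whenever s < t. (This shows that removing a point does not change the chronological relation, which underlies the paper's claim in Example 2 that punctured Minkowski space is causally continuous.) -/
lemma timelike_aux {n : ℕ} (p q : M0 n) (hpq : chronLt p q)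
    (c : EuclideanSpace ℝ (Fin n)) (hc : dist p.2 q.2 + ‖c‖ < q.1 - p.1)
    (hne : ∀ t : ℝ, t ∈ Set.Icc (0:ℝ) 1 →
      ((p.1 + t*(q.1-p.1), p.2 + t • (q.2-p.2) + (t*(1-t)) • c) : M0 n) ≠ ((0,0) : M0 n)) :
    ∃ γ : Set.Icc (0:ℝ) 1 → M0 n, IsTimelikePath ({((0, 0) : M0 n)}ᶜ) p q γ := by
  set d := dist p.2 q.2 with hd
  have hd0 : 0 ≤ d := dist_nonneg
  have hc0 : 0 ≤ ‖c‖ := norm_nonneg c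
  refine ⟨fun t => (p.1 + t.1*(q.1-p.1), p.2 + t.1 • (q.2-p.2) + (t.1*(1-t.1)) • c), ?_⟩
  have key : ∀ s t : Set.Icc (0:ℝ) 1, s ≤ t →
      dist (p.2 + s.1 • (q.2-p.2) + (s.1*(1-s.1)) • c)
        (p.2 + t.1 • (q.2-p.2) + (t.1*(1-t.1)) • c) ≤ (t.1 - s.1) * (d + ‖c‖) := by
    rintro ⟨s, hs0, hs1⟩ ⟨t, ht0, ht1⟩ hst
    have hst2 : s ≤ t := Subtype.mk_le_mk.mp hst
    simp only
    rw [dist_eq_norm]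
    have heq : (p.2 + s • (q.2-p.2) + (s*(1-s)) • c) - (p.2 + t • (q.2-p.2) + (t*(1-t)) • c)
        = (s - t) • (q.2 - p.2) + (s*(1-s) - t*(1-t)) • c := by
      rw [sub_smul, sub_smul]; abel
    rw [heq]
    have h1 : ‖(s - t) • (q.2 - p.2) + (s*(1-s) - t*(1-t)) • c‖
        ≤ ‖(s:ℝ) - t‖ * ‖q.2 - p.2‖ + ‖s*(1-s) - t*(1-t)‖ * ‖c‖ := by
      refine (norm_add_le _ _).trans ?_
      rw [norm_smul, norm_smul]
    have h2 : ‖(s:ℝ) - t‖ = t - s := by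
      rw [Real.norm_eq_abs, abs_sub_comm, abs_of_nonneg (by linarith [hst2])]
    have h3 : ‖q.2 - p.2‖ = d := by rw [hd, dist_eq_norm, norm_sub_rev]
    have h4 : ‖s*(1-s) - t*(1-t)‖ ≤ t - s := by
      have he : s*(1-s) - t*(1-t) = (s - t) * (1 - (s+t)) := by ring
      rw [Real.norm_eq_abs, he, abs_mul]
      have ha : |(s:ℝ) - t| = t - s := by rw [abs_sub_comm, abs_of_nonneg (by linarith [hst2])]
      have hb : |1 - ((s:ℝ)+t)| ≤ 1 := by rw [abs_le]; constructor <;> linarith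
      nlinarith [abs_nonneg ((s:ℝ) - t)]
    refine h1.trans ?_
    rw [h2, h3]
    nlinarith [mul_le_mul_of_nonneg_right h4 hc0]
  have hdc : d + ‖c‖ < q.1 - p.1 := hc
  refine ⟨⟨?_, ?_, ?_, ?_, ?_⟩, ?_⟩
  · -- continuity
    apply Continuous.prodMk
    · fun_prop
    · fun_prop
  · intro t
    simp only [Set.mem_compl_iff, Set.mem_singleton_iff]
    exact hne t.1 t.2
  · simp
  · simp
  · intro s t hst
    have := key s t hst
    unfold causalLe
    simp only
    have hst' : (s:ℝ) ≤ t := hst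
    have : (t.1 - s.1) * (d + ‖c‖) ≤ (t.1 - s.1) * (q.1 - p.1) := by
      apply mul_le_mul_of_nonneg_left (le_of_lt hdc) (by linarith)
    have h5 : (p.1 + t.1*(q.1-p.1)) - (p.1 + s.1*(q.1-p.1)) = (t.1 - s.1) * (q.1 - p.1) := by ring
    rw [h5]
    linarith [key s t hst]
  · intro s t hst
    have hst' : (s:ℝ) < t := hst
    unfold chronLt
    simp only
    have h5 : (p.1 + t.1*(q.1-p.1)) - (p.1 + s.1*(q.1-p.1)) = (t.1 - s.1) * (q.1 - p.1) := by ring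
    rw [h5]
    have hlt : (t.1 - s.1) * (d + ‖c‖) < (t.1 - s.1) * (q.1 - p.1) := by
      apply mul_lt_mul_of_pos_left hdc (by linarith)
    linarith [key s t (le_of_lt hst)]

/-- Timelike connectivity of punctured Minkowski space: if `p, q ≠ origin` and `p ≪ q`,
then there is a timelike path from `p` to `q` avoiding the origin. -/
theorem punctured_minkowski_timelike_connectivity (n : ℕ) (hn : 1 ≤ n) (p q : M0 n)
    (hp : p ≠ ((0, 0) : M0 n)) (hq : q ≠ ((0, 0) : M0 n)) (hpq : chronLt p q) :
    ∃ γ : Set.Icc (0:ℝ) 1 → M0 n, IsTimelikePath ({((0, 0) : M0 n)}ᶜ) p q γ := by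
  have hd : dist p.2 q.2 < q.1 - p.1 := hpq
  have ha : (0:ℝ) < q.1 - p.1 := lt_of_le_of_lt dist_nonneg hd
  by_cases h : ∀ t : ℝ, t ∈ Set.Icc (0:ℝ) 1 →
      ((p.1 + t*(q.1-p.1), p.2 + t • (q.2-p.2)) : M0 n) ≠ ((0,0) : M0 n)
  · apply timelike_aux p q hpq 0
    · simpa using hd
    · intro t ht
      simpa using h t ht
  · push_neg at h
    obtain ⟨t0, ht0, heq⟩ := h
    have h1 : p.1 + t0*(q.1-p.1) = 0 := congrArg Prod.fst heq
    have h2 : p.2 + t0 • (q.2-p.2) = 0 := congrArg Prod.snd heq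
    have ht0ne0 : t0 ≠ 0 := by
      intro h0
      apply hp
      subst h0
      simpa using heq
    have ht0ne1 : t0 ≠ 1 := by
      intro h0
      apply hq
      subst h0
      have : ((q.1, q.2) : M0 n) = ((0,0) : M0 n) := by
        convert heq using 2
        · ring
        · simp
      exact Prod.ext (congrArg Prod.fst this) (congrArg Prod.snd this)
    have ht00 : 0 < t0 := lt_of_le_of_ne ht0.1 (Ne.symm ht0ne0)
    have ht01 : t0 < 1 := lt_of_le_of_ne ht0.2 ht0ne1
    set δ := (q.1 - p.1 - dist p.2 q.2) / 2 with hδ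
    have hδ0 : 0 < δ := by rw [hδ]; linarith
    set c : EuclideanSpace ℝ (Fin n) := δ • EuclideanSpace.single (⟨0, hn⟩ : Fin n) (1:ℝ) with hc
    have hcn : ‖c‖ = δ := by
      rw [hc, norm_smul, EuclideanSpace.norm_single]
      simp [abs_of_pos hδ0]
    have hcne : c ≠ 0 := by
      intro h0
      rw [h0, norm_zero] at hcn
      exact absurd hcn.symm (ne_of_gt hδ0)
    apply timelike_aux p q hpq c
    · rw [hcn]; linarith
    · intro t ht hbad
      have hb1 : p.1 + t*(q.1-p.1) = 0 := congrArg Prod.fst hbad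
      have hb2 : p.2 + t • (q.2-p.2) + (t*(1-t)) • c = 0 := congrArg Prod.snd hbad
      have htt0 : t = t0 := by
        have : t * (q.1-p.1) = t0 * (q.1-p.1) := by linarith
        exact mul_right_cancel₀ (ne_of_gt ha) this
      rw [htt0, h2, zero_add] at hb2
      have : (t0*(1-t0)) ≠ 0 := ne_of_gt (mul_pos ht00 (by linarith))
      exact hcne (by simpa [smul_eq_zero, this] using hb2)
end

section
/- Punctured Minkowski space is not causally simple: let M = M₀ \ {(0, 0)} and let J_M = {(a, b) ∈ M × M | there exists a causal path in M from a to b}. Then the closure of J_M in M × M equals {(a, b) ∈ M × M | a ⪯ b}; in particular, for v with ‖v‖ = 1, the pair (p, q) = ((−1, v), (1, −v)) belongs to the closure of J_M but not to J_M, so J_M is not a closed subset of M × M. (This establishes the failure of causal simplicity for the spacetimes of the paper's Examples 2 and 3, showing that Theorem 1 is optimal: causal simplicity cannot be weakened to causal continuity.) -/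
/-- straight segment path -/
noncomputable def mseg {n : ℕ} (p q : M0 n) (s : Set.Icc (0:ℝ) 1) : M0 n :=
  (1 - (s:ℝ)) • p + (s:ℝ) • q

lemma mseg_fst {n : ℕ} (p q : M0 n) (s : Set.Icc (0:ℝ) 1) :
    (mseg p q s).1 = (1 - (s:ℝ)) * p.1 + (s:ℝ) * q.1 := rfl

lemma mseg_snd {n : ℕ} (p q : M0 n) (s : Set.Icc (0:ℝ) 1) :
    (mseg p q s).2 = (1 - (s:ℝ)) • p.2 + (s:ℝ) • q.2 := rfl

lemma mseg_causalPath {n : ℕ} (M : Set (M0 n)) (p q : M0 n)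
    (hle : causalLe p q) (hmem : ∀ s, mseg p q s ∈ M) :
    IsCausalPath M p q (mseg p q) := by
  refine ⟨by unfold mseg; fun_prop, hmem, ?_, ?_, ?_⟩
  · simp [mseg]
  · simp [mseg]
  · intro s t hst
    unfold causalLe
    have h2 : (mseg p q s).2 - (mseg p q t).2 = ((t:ℝ) - s) • (p.2 - q.2) := by
      rw [mseg_snd, mseg_snd]
      module
    have h1 : (mseg p q t).1 - (mseg p q s).1 = ((t:ℝ) - s) * (q.1 - p.1) := by
      rw [mseg_fst, mseg_fst]; ring
    rw [dist_eq_norm, h2, h1, norm_smul, Real.norm_eq_abs,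
      abs_of_nonneg (by linarith [Subtype.coe_le_coe.2 hst] : (0:ℝ) ≤ (t:ℝ) - s)]
    have : ‖p.2 - q.2‖ = dist p.2 q.2 := (dist_eq_norm _ _).symm
    rw [this]
    exact mul_le_mul_of_nonneg_left hle (by linarith [Subtype.coe_le_coe.2 hst])

lemma mseg_ne_zero {n : ℕ} (p q : M0 n) (hq : q ≠ 0)
    (hray : ∀ l : ℝ, l ≤ 0 → p ≠ l • q) (s : Set.Icc (0:ℝ) 1) :
    mseg p q s ≠ 0 := by
  intro h
  rcases eq_or_lt_of_le s.2.2 with h1 | h1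
  · apply hq
    have : (s:ℝ) = 1 := h1
    simpa [mseg, this] using h
  · have hne : (1 : ℝ) - (s:ℝ) ≠ 0 := by linarith
    apply hray (-(s:ℝ) / (1 - (s:ℝ)))
      (div_nonpos_iff.2 (Or.inr ⟨by linarith [s.2.1], by linarith⟩))
    have : (1 - (s:ℝ)) • p = (-(s:ℝ)) • q := by
      have := h
      unfold mseg at this
      rw [add_eq_zero_iff_eq_neg] at this
      rw [this]; module
    have := congrArg (fun x => (1 - (s:ℝ))⁻¹ • x) this
    simpa [smul_smul, inv_mul_cancel₀ hne, div_eq_inv_mul, mul_comm] using this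

set_option maxHeartbeats 1000000 in
/-- Punctured Minkowski space `M = M₀ \ {0}` is not causally simple: the closure of
`J_M = {(a,b) ∈ M × M | ∃ causal path in M from a to b}` in `M × M` is
`{(a,b) ∈ M × M | a ⪯ b}`; in particular `((-1,v),(1,-v))` with `‖v‖ = 1` lies in the
closure of `J_M` but not in `J_M`, so `J_M` is not closed in `M × M`. -/
theorem punctured_minkowski_not_causally_simple (n : ℕ) (hn : 1 ≤ n)
    (v : EuclideanSpace ℝ (Fin n)) (hv : ‖v‖ = 1)
    (Mset : Set (M0 n)) (hM : Mset = {((0, 0) : M0 n)}ᶜ)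
    (J : Set (M0 n × M0 n))
    (hJ : J = {ab : M0 n × M0 n | ab.1 ∈ Mset ∧ ab.2 ∈ Mset ∧
      ∃ γ : Set.Icc (0:ℝ) 1 → M0 n, IsCausalPath Mset ab.1 ab.2 γ}) :
    closure J ∩ (Mset ×ˢ Mset) =
      {ab : M0 n × M0 n | ab.1 ∈ Mset ∧ ab.2 ∈ Mset ∧ causalLe ab.1 ab.2} ∧
    (((-1, v) : M0 n), ((1, -v) : M0 n)) ∈ closure J ∩ (Mset ×ˢ Mset) ∧
    (((-1, v) : M0 n), ((1, -v) : M0 n)) ∉ J ∧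
    ¬ ∃ C : Set (M0 n × M0 n), IsClosed C ∧ J = C ∩ (Mset ×ˢ Mset) := by
  classical
  have hM0 : ((0, 0) : M0 n) = 0 := rfl
  have memMset : ∀ x : M0 n, x ∈ Mset ↔ x ≠ 0 := by
    intro x; rw [hM, hM0]; simp
  -- membership in J via straight segments
  have key_mem_J : ∀ p q : M0 n, p ≠ 0 → q ≠ 0 → (∀ l : ℝ, l ≤ 0 → p ≠ l • q) →
      causalLe p q → (p, q) ∈ J := by
    intro p q hp hq hray hle
    rw [hJ]
    exact ⟨(memMset p).2 hp, (memMset q).2 hq, mseg p q,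
      mseg_causalPath Mset p q hle fun s => (memMset _).2 (mseg_ne_zero p q hq hray s)⟩
  -- points in M with causalLe are in the closure of J
  have key_closure : ∀ p q : M0 n, p ≠ 0 → q ≠ 0 → causalLe p q →
      (p, q) ∈ closure J := by
    intro p q hp hq hle
    rw [Metric.mem_closure_iff]
    intro ε hε
    set t : ℝ := if p.1 = ε/2 then ε/8 else ε/4 with ht
    have ht0 : 0 < t := by rw [ht]; split_ifs <;> linarith
    have ht2 : 2*t ≠ p.1 := by
      rw [ht]; split_ifs with h
      · intro hh; rw [h] at hh; linarith
      · intro hh; exact h (by linarith)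
    have htε : 2*t ≤ ε/2 := by rw [ht]; split_ifs <;> linarith
    set w₀ : EuclideanSpace ℝ (Fin n) := EuclideanSpace.single ⟨0, hn⟩ (1:ℝ) with hw₀def
    have hw₀ : ‖w₀‖ = 1 := by rw [hw₀def, EuclideanSpace.norm_single]; norm_num
    have hgood : ∃ δ : ℝ, ∃ w : EuclideanSpace ℝ (Fin n), 0 ≤ δ ∧ δ ≤ 2*t ∧ ‖w‖ = 1 ∧
        ∀ l : ℝ, l ≤ 0 → ((p.1 - 2*t, p.2 + δ • w) : M0 n) ≠ l • q := by
      by_contra hcon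
      push_neg at hcon
      obtain ⟨l₀, hl₀, he₀⟩ := hcon 0 w₀ le_rfl (by linarith) hw₀
      obtain ⟨l₁, hl₁, he₁⟩ := hcon t w₀ ht0.le (by linarith) hw₀
      obtain ⟨l₂, hl₂, he₂⟩ := hcon t (-w₀) ht0.le (by linarith) (by rw [norm_neg]; exact hw₀)
      have T1 : p.1 - 2*t = l₁ * q.1 := congrArg Prod.fst he₁
      have T2 : p.1 - 2*t = l₂ * q.1 := congrArg Prod.fst he₂
      have S1 : p.2 + t • w₀ = l₁ • q.2 := congrArg Prod.snd he₁
      have S2 : p.2 + t • (-w₀) = l₂ • q.2 := congrArg Prod.snd he₂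
      by_cases hq1 : q.1 = 0
      · have : p.1 - 2*t = 0 := by rw [T1, hq1, mul_zero]
        exact ht2 (by linarith)
      · have hl : l₁ = l₂ := mul_right_cancel₀ hq1 (T1.symm.trans T2)
        have : (2*t) • w₀ = 0 := by
          have := S1.trans (hl ▸ S2.symm)
          have h2 : t • w₀ - t • (-w₀) = (0 : EuclideanSpace ℝ (Fin n)) := by
            have := sub_eq_zero.2 this
            calc t • w₀ - t • (-w₀) = (p.2 + t • w₀) - (p.2 + t • (-w₀)) := by abel
            _ = 0 := this
          calc (2*t) • w₀ = t • w₀ - t • (-w₀) := by module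
          _ = 0 := h2
        have : ‖(2*t) • w₀‖ = 0 := by rw [this, norm_zero]
        rw [norm_smul, hw₀, Real.norm_eq_abs] at this
        have : |2*t| = 0 := by linarith
        rw [abs_eq_zero] at this
        linarith
    obtain ⟨δ, w, hδ0, hδt, hw, hray⟩ := hgood
    set p' : M0 n := (p.1 - 2*t, p.2 + δ • w) with hp'
    have hp'q : causalLe p' q := by
      show dist (p.2 + δ • w) q.2 ≤ q.1 - (p.1 - 2*t)
      have h1 : dist (p.2 + δ • w) q.2 ≤ dist (p.2 + δ • w) p.2 + dist p.2 q.2 :=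
        dist_triangle _ _ _
      have h2 : dist (p.2 + δ • w) p.2 = δ := by
        rw [dist_eq_norm]
        have : p.2 + δ • w - p.2 = δ • w := by abel
        rw [this, norm_smul, hw, Real.norm_eq_abs, abs_of_nonneg hδ0, mul_one]
      have := hle
      unfold causalLe at this
      linarith
    have hp'0 : p' ≠ 0 := by
      have := hray 0 le_rfl
      simpa using this
    refine ⟨(p', q), key_mem_J p' q hp'0 hq hray hp'q, ?_⟩
    rw [Prod.dist_eq]
    have hd2 : dist q q = 0 := dist_self q
    have hd1 : dist p p' < ε := by
      rw [Prod.dist_eq]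
      have e1 : dist p.1 p'.1 = 2*t := by
        rw [hp']
        simp only [Real.dist_eq]
        rw [abs_of_nonneg (by linarith : (0:ℝ) ≤ p.1 - (p.1 - 2*t))]
        ring_nf
      have e2 : dist p.2 p'.2 = δ := by
        rw [hp', dist_eq_norm]
        have : p.2 - (p.2 + δ • w) = -(δ • w) := by abel
        rw [this, norm_neg, norm_smul, hw, Real.norm_eq_abs, abs_of_nonneg hδ0, mul_one]
      rw [e1, e2]
      exact max_lt (by linarith) (by linarith)
    rw [hd2]
    exact max_lt hd1 (by linarith)
  -- J is contained in the causal relation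
  have Jsub : J ⊆ {ab : M0 n × M0 n | causalLe ab.1 ab.2} := by
    rw [hJ]
    rintro ⟨p, q⟩ ⟨-, -, γ, hcont, hmem, h0, h1, hc⟩
    have := hc ⟨0, by norm_num⟩ ⟨1, by norm_num⟩ (by norm_num)
    rw [h0, h1] at this
    exact this
  have hclosed : IsClosed {ab : M0 n × M0 n | causalLe ab.1 ab.2} := by
    have : {ab : M0 n × M0 n | causalLe ab.1 ab.2} =
        (fun ab : M0 n × M0 n => dist ab.1.2 ab.2.2 - (ab.2.1 - ab.1.1)) ⁻¹' Set.Iic 0 := by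
      ext ab; simp [causalLe, sub_nonpos]
    rw [this]
    exact IsClosed.preimage (by fun_prop) isClosed_Iic
  have hsub : closure J ⊆ {ab : M0 n × M0 n | causalLe ab.1 ab.2} :=
    closure_minimal Jsub hclosed
  -- facts about the specific points
  have hmv : ((-1, v) : M0 n) ≠ 0 := by
    intro h
    have : (-1 : ℝ) = 0 := congrArg Prod.fst h
    norm_num at this
  have hpv : ((1, -v) : M0 n) ≠ 0 := by
    intro h
    have : (1 : ℝ) = 0 := congrArg Prod.fst h
    norm_num at this
  have hcle : causalLe ((-1, v) : M0 n) ((1, -v) : M0 n) := by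
    show dist v (-v) ≤ (1:ℝ) - (-1)
    rw [dist_eq_norm, sub_neg_eq_add]
    calc ‖v + v‖ ≤ ‖v‖ + ‖v‖ := norm_add_le _ _
    _ ≤ 1 - (-1) := by rw [hv]; norm_num
  -- Part 1
  have part1 : closure J ∩ (Mset ×ˢ Mset) =
      {ab : M0 n × M0 n | ab.1 ∈ Mset ∧ ab.2 ∈ Mset ∧ causalLe ab.1 ab.2} := by
    apply Set.eq_of_subset_of_subset
    · rintro ⟨p, q⟩ ⟨hcl, hp, hq⟩
      exact ⟨hp, hq, hsub hcl⟩
    · rintro ⟨p, q⟩ ⟨hp, hq, hle⟩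
      exact ⟨key_closure p q ((memMset p).1 hp) ((memMset q).1 hq) hle, ⟨hp, hq⟩⟩
  -- Part 2
  have part2 : (((-1, v) : M0 n), ((1, -v) : M0 n)) ∈ closure J ∩ (Mset ×ˢ Mset) :=
    ⟨key_closure _ _ hmv hpv hcle, (memMset _).2 hmv, (memMset _).2 hpv⟩
  -- Part 3
  have part3 : (((-1, v) : M0 n), ((1, -v) : M0 n)) ∉ J := by
    intro hmem
    rw [hJ] at hmem
    obtain ⟨-, -, γ, hcont, hmemγ, h0, h1, hc⟩ := hmem
    have hf : Continuous fun s : Set.Icc (0:ℝ) 1 => (γ s).1 := continuous_fst.comp hcont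
    have hrange : (0:ℝ) ∈ Set.range fun s : Set.Icc (0:ℝ) 1 => (γ s).1 := by
      apply intermediate_value_univ (⟨0, by norm_num⟩ : Set.Icc (0:ℝ) 1)
        (⟨1, by norm_num⟩ : Set.Icc (0:ℝ) 1) hf
      rw [Set.mem_Icc]
      constructor
      · rw [h0]; norm_num
      · rw [h1]; norm_num
    obtain ⟨t, htt⟩ := hrange
    have htt' : (γ t).1 = 0 := htt
    have hA := hc ⟨0, by norm_num⟩ t t.2.1
    have hB := hc t ⟨1, by norm_num⟩ t.2.2
    rw [h0] at hA
    rw [h1] at hB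
    set y := (γ t).2 with hy
    have hA2 : dist v y ≤ (γ t).1 - (-1) := hA
    have hB2 : dist y (-v) ≤ 1 - (γ t).1 := hB
    rw [htt'] at hA2 hB2
    have hA' : ‖v - y‖ ≤ 1 := by
      have h : dist v y = ‖v - y‖ := dist_eq_norm _ _
      rw [h] at hA2; linarith
    have hB' : ‖y + v‖ ≤ 1 := by
      have h : dist y (-v) = ‖y + v‖ := by rw [dist_eq_norm, sub_neg_eq_add]
      rw [h] at hB2; linarith
    have hsum : ‖(v - y) + (y + v)‖ = 2 := by
      have e : (v - y) + (y + v) = (2:ℝ) • v := by module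
      rw [e, norm_smul, hv, Real.norm_eq_abs]
      norm_num
    have h1n : ‖v - y‖ = 1 := by
      have := norm_add_le (v - y) (y + v)
      linarith
    have h2n : ‖y + v‖ = 1 := by
      have := norm_add_le (v - y) (y + v)
      linarith
    have heq : v - y = y + v :=
      eq_of_norm_eq_of_norm_add_eq (h1n.trans h2n.symm) (by rw [hsum, h1n, h2n]; norm_num)
    have hy0 : y = 0 := by
      have h2 : (2:ℝ) • y = 0 := by linear_combination (norm := module) -heq
      rcases smul_eq_zero.mp h2 with h | h
      · norm_num at h
      · exact h
    have : γ t = 0 := Prod.ext htt' hy0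
    have hmγ := (memMset (γ t)).1 (hmemγ t)
    exact hmγ this
  refine ⟨part1, part2, part3, ?_⟩
  rintro ⟨C, hC, hJC⟩
  apply part3
  rw [hJC]
  refine ⟨closure_minimal (by rw [hJC]; exact Set.inter_subset_left) hC part2.1, part2.2⟩
end
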